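/- arXiv:2005.04345 — 6 statements merged into one kernel-verified Lean document; each statement's English description precedes it below -/
import Mathlib

section
/- (Worst-group error lower bound in terms of core and spurious weights.) Let w = [w_core, w_spu, w_noise] ∈ ℝ^{N+2} with (w_core, w_spu) ≠ (0,0), and let x = [x_core, x_spu, x_noise] be a test point from the minority group with y = 1, a = −1: x_core ∼ N(1, σ_core²), x_spu ∼ N(−1, σ_spu²), x_noise ∼ N(0, (σ_noise²/N)·I_N), all independent. If P(|⟨w_noise, x_noise⟩| > c₃) ≤ c₄ for constants c₃, c₄ > 0, then P(w·x < 0) ≥ Φ((−c₃ + w_spu − w_core)/√(w_core²·σ_core² + w_spu²·σ_spu²)) − c₄, where Φ is the standard Gaussian CDF. -/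
open MeasureTheory ProbabilityTheory Real
open scoped ENNReal NNReal

/-- The standard Gaussian CDF `Φ`. -/
noncomputable def Phi (t : ℝ) : ℝ := (gaussianReal 0 1 (Set.Iic t)).toReal

/-!
The signal `w_core x_core + w_spu x_spu` is Gaussian with mean `w_core - w_spu` and variance
`w_core² σ_core² + w_spu² σ_spu²`, so it lies below `-c₃` with probability
`Φ((-c₃ + w_spu - w_core) / √(w_core² σ_core² + w_spu² σ_spu²))`. Outside the event
`|⟨w_noise, x_noise⟩| > c₃`, of probability at most `c₄`, this forces `w · x < 0`.
-/

lemma measureReal_lt_neg_le_add {Ω : Type*} [MeasurableSpace Ω] (μ : Measure Ω)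
    [IsFiniteMeasure μ] (f g : Ω → ℝ) (c : ℝ) :
    μ.real {ω | f ω < -c} ≤ μ.real {ω | f ω + g ω < 0} + μ.real {ω | c < |g ω|} := by
  refine (measureReal_mono fun ω (hω : f ω < -c) => ?_).trans (measureReal_union_le _ _)
  by_contra! h
  simp only [Set.mem_union, Set.mem_ofPred_eq, not_or, not_lt] at h
  linarith [le_abs_self (g ω)]

lemma measurePreserving_gaussianReal_standardize (m : ℝ) {v : ℝ≥0} (hv : v ≠ 0) :
    MeasurePreserving (fun x => (x - m) / √v) (gaussianReal m v) (gaussianReal 0 1) := by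
  refine ⟨by fun_prop, ?_⟩
  have : (fun x => (x - m) / √v) = (· / √(v : ℝ)) ∘ (· - m) := rfl
  rw [this, ← Measure.map_map (by fun_prop) (by fun_prop), gaussianReal_map_sub_const,
    gaussianReal_map_div_const, sub_self, zero_div]
  congr
  ext
  simp [Real.sq_sqrt, hv]

lemma gaussianReal_real_Iio (m : ℝ) {v : ℝ≥0} (hv : v ≠ 0) (t : ℝ) :
    (gaussianReal m v).real (Set.Iio t) = Phi ((t - m) / √v) := by
  have hσ : 0 < √(v : ℝ) := Real.sqrt_pos.2 (NNReal.coe_pos.2 (pos_iff_ne_zero.2 hv))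
  have hpre : (fun x => (x - m) / √v) ⁻¹' Set.Iio ((t - m) / √v) = Set.Iio t := by
    ext x
    simp [div_lt_div_iff_of_pos_right hσ]
  have := nullSingletonClass_gaussianReal (μ := 0) one_ne_zero
  rw [← hpre, (measurePreserving_gaussianReal_standardize m hv).measureReal_preimage
    measurableSet_Iio.nullMeasurableSet, Phi, measureReal_def,
    measure_congr Iio_ae_eq_Iic]

lemma gaussianReal_prod_map_linear (a b m₁ m₂ : ℝ) (v₁ v₂ : ℝ≥0) :
    ((gaussianReal m₁ v₁).prod (gaussianReal m₂ v₂)).map (fun p => a * p.1 + b * p.2) =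
      gaussianReal (a * m₁ + b * m₂) (⟨a ^ 2, sq_nonneg a⟩ * v₁ + ⟨b ^ 2, sq_nonneg b⟩ * v₂) := by
  have : (fun p : ℝ × ℝ => a * p.1 + b * p.2) =
      (fun p => p.1 + p.2) ∘ Prod.map (a * ·) (b * ·) := rfl
  rw [this, ← Measure.map_map (by fun_prop) (by fun_prop),
    ← Measure.map_prod_map _ _ (by fun_prop) (by fun_prop), gaussianReal_map_const_mul,
    gaussianReal_map_const_mul]
  exact gaussianReal_conv_gaussianReal

theorem minority_error_lower_bound_general
    (N : ℕ) (wcore wspu : ℝ) (wnoise : Fin N → ℝ) (hw : (wcore, wspu) ≠ ((0 : ℝ), (0 : ℝ)))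
    (vCore vSpu vNoise : ℝ≥0) (hvCore : 0 < vCore) (hvSpu : 0 < vSpu)
    (c3 c4 : ℝ)
    (hnoise : ((Measure.pi fun _ : Fin N => gaussianReal 0 (vNoise / (N : ℝ≥0)))
        {z | c3 < |∑ j, wnoise j * z j|}).toReal ≤ c4) :
    Phi ((-c3 + wspu - wcore) /
          Real.sqrt (wcore ^ 2 * (vCore : ℝ) + wspu ^ 2 * (vSpu : ℝ))) - c4 ≤
      (((gaussianReal 1 vCore).prod ((gaussianReal (-1) vSpu).prod
            (Measure.pi fun _ : Fin N => gaussianReal 0 (vNoise / (N : ℝ≥0)))))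
          {x | wcore * x.1 + wspu * x.2.1 + ∑ j, wnoise j * x.2.2 j < 0}).toReal := by
  set noise := Measure.pi fun _ : Fin N => gaussianReal 0 (vNoise / (N : ℝ≥0))
  set μ := (gaussianReal 1 vCore).prod ((gaussianReal (-1) vSpu).prod noise)
  set V : ℝ≥0 := ⟨wcore ^ 2, sq_nonneg wcore⟩ * vCore + ⟨wspu ^ 2, sq_nonneg wspu⟩ * vSpu
  have hV : (V : ℝ) = wcore ^ 2 * vCore + wspu ^ 2 * vSpu := rfl
  have hV0 : V ≠ 0 := by
    rw [← NNReal.coe_ne_zero, hV]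
    contrapose! hw
    obtain ⟨hwcore, hwspu⟩ := (add_eq_zero_iff_of_nonneg (by positivity) (by positivity)).1 hw
    simp_all [hvCore.ne', hvSpu.ne']
  have hsignal : MeasurePreserving (fun x : ℝ × ℝ × (Fin N → ℝ) => wcore * x.1 + wspu * x.2.1)
      μ (gaussianReal (wcore * 1 + wspu * (-1)) V) :=
    (⟨by fun_prop, gaussianReal_prod_map_linear _ _ _ _ _ _⟩ : MeasurePreserving _ _ _).comp
      (MeasurePreserving.id _ |>.prod measurePreserving_fst)
  have hcore : μ.real {x | wcore * x.1 + wspu * x.2.1 < -c3} =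
      Phi ((-c3 + wspu - wcore) / √(wcore ^ 2 * vCore + wspu ^ 2 * vSpu)) := by
    rw [← hV, show -c3 + wspu - wcore = -c3 - (wcore * 1 + wspu * -1) by ring,
      ← gaussianReal_real_Iio _ hV0]
    exact hsignal.measureReal_preimage measurableSet_Iio.nullMeasurableSet
  have hnoise_marginal : μ.real {x | c3 < |∑ j, wnoise j * x.2.2 j|} ≤ c4 := by
    have hproj : MeasurePreserving (fun x : ℝ × ℝ × (Fin N → ℝ) => x.2.2) μ noise :=
      measurePreserving_snd.comp measurePreserving_snd
    rw [← measureReal_def] at hnoise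
    refine (hproj.measureReal_preimage (s := {z | c3 < |∑ j, wnoise j * z j|}) ?_).trans_le hnoise
    exact (measurableSet_lt measurable_const (by fun_prop)).nullMeasurableSet
  rw [← measureReal_def]
  linarith [measureReal_lt_neg_le_add μ (fun x => wcore * x.1 + wspu * x.2.1)
    (fun x => ∑ j, wnoise j * x.2.2 j) c3]

/-- **Worst-group error lower bound in terms of core and spurious weights.** For a model
`w = [w_core, w_spu, w_noise]` with `(w_core, w_spu) ≠ (0,0)` and a test point from the
minority group `y = 1, a = −1` (`x_core ∼ N(1, σ_core²)`, `x_spu ∼ N(−1, σ_spu²)`,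
`x_noise ∼ N(0, (σ_noise²/N)·I_N)`, independent), if `P(|⟨w_noise, x_noise⟩| > c₃) ≤ c₄`
then `P(w·x < 0) ≥ Φ((−c₃ + w_spu − w_core)/√(w_core²σ_core² + w_spu²σ_spu²)) − c₄`. -/
theorem minority_error_lower_bound
    (N : ℕ) (wcore wspu : ℝ) (wnoise : Fin N → ℝ) (hw : (wcore, wspu) ≠ ((0 : ℝ), (0 : ℝ)))
    (vCore vSpu vNoise : ℝ≥0) (hvCore : 0 < vCore) (hvSpu : 0 < vSpu)
    (c3 c4 : ℝ) (hc3 : 0 < c3) (hc4 : 0 < c4)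
    (hnoise : ((Measure.pi fun _ : Fin N => gaussianReal 0 (vNoise / (N : ℝ≥0)))
        {z | c3 < |∑ j, wnoise j * z j|}).toReal ≤ c4) :
    Phi ((-c3 + wspu - wcore) /
          Real.sqrt (wcore ^ 2 * (vCore : ℝ) + wspu ^ 2 * (vSpu : ℝ))) - c4 ≤
      (((gaussianReal 1 vCore).prod ((gaussianReal (-1) vSpu).prod
            (Measure.pi fun _ : Fin N => gaussianReal 0 (vNoise / (N : ℝ≥0)))))
          {x | wcore * x.1 + wspu * x.2.1 + ∑ j, wnoise j * x.2.2 j < 0}).toReal :=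
  minority_error_lower_bound_general N wcore wspu wnoise hw vCore vSpu vNoise hvCore hvSpu c3 c4
    hnoise
end

section
/- (Tail bound for the inner product of two independent Gaussian vectors.) Let z₁, z₂ ∼ N(0, σ²·I_N) be independent Gaussian vectors in ℝ^N. Then for every t > 0, P(|z₁·z₂| ≥ σ²·t) ≤ 2·exp(−N/8) + 2·exp(−t²/(4·N)). -/
/-!
Conditionally on `z₁ = x`, the inner product `z₁·z₂` is a centred Gaussian of variance `σ²‖x‖²`,
and `𝔼 exp(a X²) = (1 - 2aσ²)^(-1/2)` for `X ∼ N(0, σ²)`, so `z₁·z₂` has moment generating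
function `s ↦ (1 - s²σ⁴)^(-N/2)`. A two-sided Chernoff bound at `s = u/σ²`, combined with
`(1 - u²)^(-1/2) ≤ exp(u²)` for `u² ≤ 1/2`, bounds the tail by `2 exp(-ut + Nu²)`; the choice
`u = min(t/(2N), 1/2)` makes this at most `2 exp(-t²/(4N))` when `t ≤ N` and `2 exp(-N/8)`
otherwise.
-/

open MeasureTheory ProbabilityTheory Real
open scoped ENNReal NNReal

lemma lintegral_exp_mul_gaussianReal (μ : ℝ) (v : ℝ≥0) (c : ℝ) :
    ∫⁻ y, ENNReal.ofReal (exp (c * y)) ∂gaussianReal μ v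
      = ENNReal.ofReal (exp (μ * c + v * c ^ 2 / 2)) := by
  rw [← ofReal_integral_eq_lintegral_ofReal (integrable_exp_mul_gaussianReal c)
    (ae_of_all _ fun _ => (exp_pos _).le)]
  exact congrArg ENNReal.ofReal (congrFun mgf_id_gaussianReal c)

lemma exp_mul_sq_mul_gaussianPDFReal {v v' : ℝ≥0} (hv : v ≠ 0) {a : ℝ}
    (hv' : (v' : ℝ) * (1 - 2 * a * v) = v) (x : ℝ) :
    exp (a * x ^ 2) * gaussianPDFReal 0 v x
      = (√(1 - 2 * a * v))⁻¹ * gaussianPDFReal 0 v' x := by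
  have hv0 : (0 : ℝ) < v := by positivity
  have hpos : 0 < 1 - 2 * a * v := by
    by_contra! h
    nlinarith [v'.coe_nonneg]
  have hv'0 : (v' : ℝ) ≠ 0 := by rintro h; rw [h, zero_mul] at hv'; exact hv0.ne hv'
  simp only [gaussianPDFReal, sub_zero]
  rw [mul_left_comm, ← exp_add, ← mul_assoc, ← mul_inv, ← sqrt_mul hpos.le]
  congr 3
  · linear_combination -2 * π * hv'
  · field_simp
    linear_combination -x ^ 2 * hv'

lemma lintegral_exp_mul_sq_gaussianReal (v : ℝ≥0) {a : ℝ} (ha : 2 * a * v < 1) :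
    ∫⁻ x, ENNReal.ofReal (exp (a * x ^ 2)) ∂gaussianReal 0 v
      = ENNReal.ofReal (√(1 - 2 * a * v))⁻¹ := by
  rcases eq_or_ne v 0 with rfl | hv
  · simp [gaussianReal_zero_var]
  have hpos : 0 < 1 - 2 * a * v := by linarith
  set v' : ℝ≥0 := ⟨v / (1 - 2 * a * v), by positivity⟩
  have hv' : (v' : ℝ) * (1 - 2 * a * v) = v := div_mul_cancel₀ _ hpos.ne'
  have hv'0 : v' ≠ 0 := by
    rintro h
    rw [h, NNReal.coe_zero, zero_mul] at hv'
    exact hv (NNReal.coe_eq_zero.1 hv'.symm)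
  rw [gaussianReal_of_var_ne_zero 0 hv,
    lintegral_withDensity_eq_lintegral_mul _ (measurable_gaussianPDF 0 v) (by fun_prop)]
  simp_rw [Pi.mul_apply, gaussianPDF, ← ENNReal.ofReal_mul (gaussianPDFReal_nonneg 0 v _),
    mul_comm (gaussianPDFReal 0 v _), exp_mul_sq_mul_gaussianPDFReal hv hv',
    ENNReal.ofReal_mul (inv_nonneg.2 (sqrt_nonneg _))]
  rw [lintegral_const_mul _ (measurable_gaussianPDFReal _ _).ennreal_ofReal,
    lintegral_gaussianPDFReal_eq_one _ hv'0, mul_one]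

lemma lintegral_exp_mul_mul_gaussianReal_prod (v : ℝ≥0) {s : ℝ} (hs : (s * v) ^ 2 < 1) :
    ∫⁻ p, ENNReal.ofReal (exp (s * (p.1 * p.2))) ∂(gaussianReal 0 v).prod (gaussianReal 0 v)
      = ENNReal.ofReal (√(1 - (s * v) ^ 2))⁻¹ := by
  rw [lintegral_prod _ (by fun_prop)]
  simp_rw [← mul_assoc s, lintegral_exp_mul_gaussianReal, zero_mul, zero_add]
  have hsq : ∀ x : ℝ, (v : ℝ) * (s * x) ^ 2 / 2 = v * s ^ 2 / 2 * x ^ 2 := fun x => by ring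
  have h2av : 2 * (v * s ^ 2 / 2) * v = (s * v) ^ 2 := by ring
  simp_rw [hsq]
  rw [lintegral_exp_mul_sq_gaussianReal v (h2av ▸ hs), h2av]

lemma mgf_mul_gaussianReal_prod (v : ℝ≥0) {s : ℝ} (hs : (s * v) ^ 2 < 1) :
    mgf (fun p : ℝ × ℝ => p.1 * p.2) ((gaussianReal 0 v).prod (gaussianReal 0 v)) s
      = (√(1 - (s * v) ^ 2))⁻¹ := by
  rw [mgf, integral_eq_lintegral_of_nonneg_ae (ae_of_all _ fun _ => (exp_pos _).le)
    (by fun_prop), lintegral_exp_mul_mul_gaussianReal_prod v hs,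
    ENNReal.toReal_ofReal (inv_nonneg.2 (sqrt_nonneg _))]

lemma mgf_sum_pi_prod {ι α β : Type*} [Fintype ι] [MeasurableSpace α] [MeasurableSpace β]
    (μ : Measure α) (ν : Measure β) [SigmaFinite μ] [SigmaFinite ν] (f : α × β → ℝ) (s : ℝ) :
    mgf (fun p => ∑ i, f (p.1 i, p.2 i)) ((Measure.pi fun _ : ι => μ).prod (.pi fun _ => ν)) s
      = mgf f (μ.prod ν) s ^ Fintype.card ι := by
  rw [mgf, ← (measurePreserving_arrowProdEquivProdArrow α β ι (fun _ => μ) (fun _ => ν)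
    |>.integral_comp')]
  simp_rw [Finset.mul_sum, exp_sum]
  exact integral_fintype_prod_eq_pow (fun q => exp (s * f q))

lemma mgf_sum_mul_gaussianReal_pi (ι : Type*) [Fintype ι] (v : ℝ≥0) {s : ℝ}
    (hs : (s * v) ^ 2 < 1) :
    mgf (fun p => ∑ i, p.1 i * p.2 i)
        ((Measure.pi fun _ : ι => gaussianReal 0 v).prod (.pi fun _ => gaussianReal 0 v)) s
      = (√(1 - (s * v) ^ 2))⁻¹ ^ Fintype.card ι := by
  rw [mgf_sum_pi_prod (gaussianReal 0 v) (gaussianReal 0 v) (fun p : ℝ × ℝ => p.1 * p.2),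
    mgf_mul_gaussianReal_prod v hs]

lemma measureReal_abs_ge_le_exp_mul_mgf_add {Ω : Type*} [MeasurableSpace Ω] {μ : Measure Ω}
    [IsFiniteMeasure μ] {X : Ω → ℝ} (ε : ℝ) {s : ℝ} (hs : 0 ≤ s)
    (h_int : Integrable (fun ω => exp (s * X ω)) μ)
    (h_int_neg : Integrable (fun ω => exp (-s * X ω)) μ) :
    μ.real {ω | ε ≤ |X ω|} ≤ exp (-s * ε) * (mgf X μ s + mgf X μ (-s)) := by
  have hsub : {ω | ε ≤ |X ω|} ⊆ {ω | ε ≤ X ω} ∪ {ω | X ω ≤ -ε} := fun ω (hω : ε ≤ |X ω|) =>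
    (le_abs'.1 hω).symm
  calc μ.real {ω | ε ≤ |X ω|} ≤ μ.real {ω | ε ≤ X ω} + μ.real {ω | X ω ≤ -ε} :=
        (measureReal_mono hsub).trans (measureReal_union_le _ _)
    _ ≤ exp (-s * ε) * mgf X μ s + exp (-(-s) * -ε) * mgf X μ (-s) :=
        add_le_add (measure_ge_le_exp_mul_mgf ε hs h_int)
          (measure_le_le_exp_mul_mgf (-ε) (neg_nonpos.2 hs) h_int_neg)
    _ = exp (-s * ε) * (mgf X μ s + mgf X μ (-s)) := by ring_nf

lemma measureReal_abs_sum_mul_gaussianReal_pi_ge_le (ι : Type*) [Fintype ι] (v : ℝ≥0)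
    (ε : ℝ) {s : ℝ} (hs0 : 0 ≤ s) (hs : (s * v) ^ 2 < 1) :
    ((Measure.pi fun _ : ι => gaussianReal 0 v).prod (.pi fun _ => gaussianReal 0 v)).real
        {p | ε ≤ |∑ i, p.1 i * p.2 i|}
      ≤ 2 * exp (-s * ε) * (√(1 - (s * v) ^ 2))⁻¹ ^ Fintype.card ι := by
  have hsq : (-s * v) ^ 2 = (s * v) ^ 2 := by ring
  have hmgf := mgf_sum_mul_gaussianReal_pi ι v hs
  have hmgf' := mgf_sum_mul_gaussianReal_pi ι v (hsq ▸ hs)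
  have hpos : 0 < (√(1 - (s * v) ^ 2))⁻¹ ^ Fintype.card ι :=
    pow_pos (inv_pos.2 (sqrt_pos.2 (by linarith))) _
  refine (measureReal_abs_ge_le_exp_mul_mgf_add ε hs0 (mgf_pos_iff.1 ?_)
    (mgf_pos_iff.1 ?_)).trans_eq ?_
  · rwa [hmgf]
  · rwa [hmgf', hsq]
  · rw [hmgf, hmgf', hsq]
    ring

lemma inv_sqrt_one_sub_le_exp {x : ℝ} (h0 : 0 ≤ x) (h : x ≤ 1 / 2) : (√(1 - x))⁻¹ ≤ exp x := by
  have key : 1 ≤ (1 - x) * exp (2 * x) := by nlinarith [add_one_le_exp (2 * x)]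
  have hsqrt : exp x * √(1 - x) = √((1 - x) * exp (2 * x)) := by
    rw [sqrt_mul (by linarith), two_mul, exp_add, sqrt_mul_self (exp_pos x).le, mul_comm]
  rw [inv_le_iff_one_le_mul₀ (sqrt_pos.2 (by linarith)), hsqrt]
  exact one_le_sqrt.2 key

lemma exists_exp_neg_mul_add_mul_sq_le {N t : ℝ} (ht : 0 < t) :
    ∃ u, 0 ≤ u ∧ u ≤ 1 / 2 ∧
      exp (-(u * t) + N * u ^ 2) ≤ exp (-N / 8) + exp (-t ^ 2 / (4 * N)) := by
  rcases le_or_gt t N with htN | hNt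
  · have hN0 : 0 < N := ht.trans_le htN
    refine ⟨t / (2 * N), by positivity, by rw [div_le_iff₀ (by positivity)]; linarith, ?_⟩
    have : -(t / (2 * N) * t) + N * (t / (2 * N)) ^ 2 = -t ^ 2 / (4 * N) := by
      field_simp
      ring
    rw [this]
    linarith [exp_pos (-N / 8)]
  · refine ⟨1 / 2, by norm_num, le_rfl, ?_⟩
    have : exp (-(1 / 2 * t) + N * (1 / 2) ^ 2) ≤ exp (-N / 8) := exp_le_exp.2 (by linarith)
    linarith [exp_pos (-t ^ 2 / (4 * N))]

/-- **Tail bound for the inner product of two independent Gaussian vectors.** Let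
`z₁, z₂ ∼ N(0, σ²·I_N)` be independent (modelled by the product of the two i.i.d.-coordinate
Gaussian measures). Then for `t > 0`,
`P(|z₁·z₂| ≥ σ²·t) ≤ 2·exp(−N/8) + 2·exp(−t²/(4·N))`. -/
theorem gaussian_inner_product_pair_tail (N : ℕ) (σ2 : ℝ≥0) (hσ2 : 0 < σ2)
    (t : ℝ) (ht : 0 < t) :
    ((Measure.pi fun _ : Fin N => gaussianReal 0 σ2).prod
        (Measure.pi fun _ : Fin N => gaussianReal 0 σ2))
        {p | (σ2 : ℝ) * t ≤ |∑ i, p.1 i * p.2 i|}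
      ≤ ENNReal.ofReal (2 * Real.exp (-(N : ℝ) / 8) + 2 * Real.exp (-(t ^ 2) / (4 * N))) := by
  obtain ⟨u, hu0, hu, hexp⟩ := exists_exp_neg_mul_add_mul_sq_le (N := N) ht
  have hσ2' : (σ2 : ℝ) ≠ 0 := by positivity
  have hsu : u / σ2 * σ2 = u := div_mul_cancel₀ u hσ2'
  have htail := measureReal_abs_sum_mul_gaussianReal_pi_ge_le (Fin N) σ2 (σ2 * t)
    (by positivity : 0 ≤ u / σ2) (by rw [hsu]; nlinarith)
  have hpow : (√(1 - u ^ 2))⁻¹ ^ N ≤ exp (N * u ^ 2) := by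
    rw [exp_nat_mul]
    exact pow_le_pow_left₀ (by positivity) (inv_sqrt_one_sub_le_exp (sq_nonneg u) (by nlinarith)) N
  rw [ENNReal.le_ofReal_iff_toReal_le (measure_ne_top _ _) (by positivity)]
  calc _ ≤ 2 * exp (-(u / σ2) * (σ2 * t)) * (√(1 - (u / σ2 * σ2) ^ 2))⁻¹ ^ Fintype.card (Fin N) :=
        htail
    _ = 2 * (exp (-(u * t)) * (√(1 - u ^ 2))⁻¹ ^ N) := by
        rw [hsu, Fintype.card_fin, show -(u / σ2) * (σ2 * t) = -(u * t) by field_simp]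
        ring
    _ ≤ 2 * (exp (-(u * t)) * exp (N * u ^ 2)) := by gcongr
    _ ≤ 2 * exp (-(N : ℝ) / 8) + 2 * exp (-(t ^ 2) / (4 * N)) := by
        rw [← exp_add]
        linarith
end

section
/- (Norm lower bound from the fraction of memorized majority points.) Suppose the training noise vectors x_noise^(1), …, x_noise^(n) ∈ ℝ^N satisfy ‖x_noise^(i)‖₂² ≥ (1−c₁)·σ_noise² for all i and |⟨x_noise^(i), x_noise^(j)⟩| ≤ σ_noise²/n⁶ for all i ≠ j, with c₁ ∈ (0,1). Let w = [w_core, w_spu, w_noise] with w_noise = Σ_i s_i·x_noise^(i), and suppose s_i² ≤ 10·n/σ_noise⁴ for all i. Then for every γ > 0, ‖w‖₂² ≥ (γ⁴·(1−c₁)/σ_noise²)·δ_maj(w, γ²)·n_maj − 10/(σ_noise²·n³), where δ_maj(w, γ²) is the fraction of the n_maj majority training points with |s_i| > γ²/σ_noise². -/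
open Finset
open scoped Classical

/-! The squared norm of `Σ_i s_i x_i` is the quadratic form of the Gram matrix of the `x_i`.
Its diagonal part is at least `(γ²/σ²)²·(1-c₁)σ²` for every memorized point, while each of the
at most `n²` off-diagonal terms is at most `(10n/σ⁴)·(σ²/n⁶)` in absolute value, so together they
cost at most `10/(σ² n³)`. -/

theorem sum_sq_sum_mul_eq_sum_sum_mul_sum_mul {R ι κ : Type*} [CommSemiring R]
    [Fintype ι] [Fintype κ] (s : ι → R) (x : ι → κ → R) :
    ∑ k, (∑ i, s i * x i k) ^ 2 = ∑ i, ∑ j, s i * s j * ∑ k, x i k * x j k := by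
  calc ∑ k, (∑ i, s i * x i k) ^ 2 = ∑ k, ∑ i, ∑ j, s i * s j * (x i k * x j k) :=
        sum_congr rfl fun k _ => by
          rw [sq, sum_mul_sum]
          exact sum_congr rfl fun i _ => sum_congr rfl fun j _ => by ring
    _ = ∑ i, ∑ j, s i * s j * ∑ k, x i k * x j k := by
        simp only [mul_sum]
        rw [sum_comm]
        exact sum_congr rfl fun i _ => sum_comm

theorem sum_sq_mul_diag_sub_le_sum_sum_mul {ι : Type*} [Fintype ι] (G : ι → ι → ℝ) (s : ι → ℝ)
    {B ε : ℝ} (hs : ∀ i, s i ^ 2 ≤ B) (hε : 0 ≤ ε) (hG : ∀ i j, i ≠ j → |G i j| ≤ ε) :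
    ∑ i, s i ^ 2 * G i i - (Fintype.card ι : ℝ) ^ 2 * (B * ε) ≤
      ∑ i, ∑ j, s i * s j * G i j := by
  have hterm : ∀ i j, i ≠ j → -(B * ε) ≤ s i * s j * G i j := by
    intro i j hij
    have hB : 0 ≤ B := (sq_nonneg _).trans (hs i)
    have hss : |s i * s j| ≤ B :=
      abs_le_of_sq_le_sq (by rw [mul_pow, sq B]; exact mul_le_mul (hs i) (hs j) (sq_nonneg _) hB) hB
    refine neg_le_of_abs_le ?_
    rw [abs_mul]
    exact mul_le_mul hss (hG i j hij) (abs_nonneg _) hB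
  have hrow : ∀ i, s i ^ 2 * G i i - Fintype.card ι * (B * ε) ≤ ∑ j, s i * s j * G i j := by
    intro i
    have hB : 0 ≤ B := (sq_nonneg _).trans (hs i)
    rw [← add_sum_erase _ _ (mem_univ i)]
    have hoff : -(Fintype.card ι * (B * ε)) ≤ ∑ j ∈ univ.erase i, s i * s j * G i j :=
      calc -(Fintype.card ι * (B * ε)) ≤ -((univ.erase i).card * (B * ε)) := by
            gcongr
            exact_mod_cast (card_erase_le).trans (card_univ).le
        _ = ∑ _j ∈ univ.erase i, -(B * ε) := by simp
        _ ≤ ∑ j ∈ univ.erase i, s i * s j * G i j :=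
            sum_le_sum fun j hj => hterm i j (ne_of_mem_erase hj).symm
    rw [sq]
    linarith
  calc ∑ i, s i ^ 2 * G i i - (Fintype.card ι : ℝ) ^ 2 * (B * ε)
      = ∑ i, (s i ^ 2 * G i i - Fintype.card ι * (B * ε)) := by
        rw [sum_sub_distrib, sum_const, card_univ, nsmul_eq_mul]; ring
    _ ≤ ∑ i, ∑ j, s i * s j * G i j := sum_le_sum fun i _ => hrow i

theorem card_filter_lt_abs_mul_le_sum_sq_mul {ι : Type*} [Fintype ι] (A : Finset ι)
    (s g : ι → ℝ) {t c : ℝ} (ht : 0 ≤ t) (hc : 0 ≤ c) (hg : ∀ i, c ≤ g i) :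
    ((A.filter fun i => t < |s i|).card : ℝ) * (t ^ 2 * c) ≤ ∑ i, s i ^ 2 * g i := by
  have hmem : ∀ i ∈ A.filter fun i => t < |s i|, t ^ 2 * c ≤ s i ^ 2 * g i := by
    intro i hi
    have hsq : t ^ 2 ≤ s i ^ 2 := by
      rw [← sq_abs (s i)]
      exact pow_le_pow_left₀ ht (mem_filter.mp hi).2.le 2
    exact mul_le_mul hsq (hg i) hc (sq_nonneg _)
  calc ((A.filter fun i => t < |s i|).card : ℝ) * (t ^ 2 * c)
      = ∑ _i ∈ A.filter fun i => t < |s i|, t ^ 2 * c := by rw [sum_const, nsmul_eq_mul]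
    _ ≤ ∑ i ∈ A.filter fun i => t < |s i|, s i ^ 2 * g i := sum_le_sum hmem
    _ ≤ ∑ i, s i ^ 2 * g i :=
        sum_le_sum_of_subset_of_nonneg (subset_univ _)
          fun i _ _ => mul_nonneg (sq_nonneg _) (hc.trans (hg i))

theorem norm_lower_bound_from_memorized_fraction_general
    (N nMaj : ℕ) (n : ℕ)
    (Maj : Finset (Fin n))
    (xnoise : Fin n → Fin N → ℝ)
    (σn2 : ℝ) (hσn2 : 0 < σn2) (c1 : ℝ) (hc1' : c1 < 1)
    (hnorm : ∀ i, (1 - c1) * σn2 ≤ ∑ k, (xnoise i k) ^ 2)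
    (hdot : ∀ i j, i ≠ j → |∑ k, xnoise i k * xnoise j k| ≤ σn2 / (n : ℝ) ^ 6)
    (wcore wspu : ℝ) (s : Fin n → ℝ)
    (hs : ∀ i, (s i) ^ 2 ≤ 10 * (n : ℝ) / σn2 ^ 2)
    (γ : ℝ) :
    (γ ^ 4 * (1 - c1) / σn2) *
        (((Maj.filter fun i => γ ^ 2 / σn2 < |s i|).card : ℝ) / (nMaj : ℝ)) * (nMaj : ℝ) -
        10 / (σn2 * (n : ℝ) ^ 3) ≤
      wcore ^ 2 + wspu ^ 2 + ∑ k, (∑ i, s i * xnoise i k) ^ 2 := by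
  set m : ℝ := ((Maj.filter fun i => γ ^ 2 / σn2 < |s i|).card : ℝ)
  have hnoise : 0 ≤ (1 - c1) * σn2 := mul_nonneg (by linarith) hσn2.le
  have hdiag := card_filter_lt_abs_mul_le_sum_sq_mul Maj s (fun i => ∑ k, xnoise i k * xnoise i k)
    (t := γ ^ 2 / σn2) (c := (1 - c1) * σn2) (by positivity) hnoise
    fun i => by simpa only [sq] using hnorm i
  have hcross := sum_sq_mul_diag_sub_le_sum_sum_mul (fun i j => ∑ k, xnoise i k * xnoise j k) s hs
    (by positivity) hdot
  have hcoef : γ ^ 4 * (1 - c1) / σn2 = (γ ^ 2 / σn2) ^ 2 * ((1 - c1) * σn2) := by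
    field_simp
  have hfrac : m / nMaj * nMaj ≤ m := by
    rcases eq_or_ne (nMaj : ℝ) 0 with h | h
    · simp [h, m]
    · rw [div_mul_cancel₀ _ h]
  have herr : (Fintype.card (Fin n) : ℝ) ^ 2 * (10 * n / σn2 ^ 2 * (σn2 / n ^ 6)) =
      10 / (σn2 * n ^ 3) := by
    rw [Fintype.card_fin]
    rcases eq_or_ne (n : ℝ) 0 with h | h
    · simp [h]
    · field_simp
  rw [sum_sq_sum_mul_eq_sum_sum_mul_sum_mul, mul_assoc, hcoef]
  have hscaled := mul_le_mul_of_nonneg_left hfrac (mul_nonneg (sq_nonneg (γ ^ 2 / σn2)) hnoise)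
  linarith [sq_nonneg wcore, sq_nonneg wspu]

/-- **Norm lower bound from the fraction of memorized majority points.** Given training
noise vectors `x_noise⁽ⁱ⁾ ∈ ℝ^N` with `‖x_noise⁽ⁱ⁾‖₂² ≥ (1−c₁)·σ_noise²` and
`|⟨x_noise⁽ⁱ⁾, x_noise⁽ʲ⁾⟩| ≤ σ_noise²/n⁶` for `i ≠ j`, and a model
`w = [w_core, w_spu, Σ_i s_i·x_noise⁽ⁱ⁾]` with `s_i² ≤ 10·n/σ_noise⁴`, we have for `γ > 0`
`‖w‖₂² ≥ (γ⁴·(1−c₁)/σ_noise²)·δ_maj(w,γ²)·n_maj − 10/(σ_noise²·n³)`, where `δ_maj(w,γ²)` is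
the fraction of the `n_maj` majority points with `|s_i| > γ²/σ_noise²`. -/
theorem norm_lower_bound_from_memorized_fraction
    (N nMaj nMin : ℕ) (n : ℕ) (hn : n = nMaj + nMin)
    (Maj : Finset (Fin n)) (hMajCard : Maj.card = nMaj)
    (xnoise : Fin n → Fin N → ℝ)
    (σn2 : ℝ) (hσn2 : 0 < σn2) (c1 : ℝ) (hc1 : 0 < c1) (hc1' : c1 < 1)
    (hnorm : ∀ i, (1 - c1) * σn2 ≤ ∑ k, (xnoise i k) ^ 2)
    (hdot : ∀ i j, i ≠ j → |∑ k, xnoise i k * xnoise j k| ≤ σn2 / (n : ℝ) ^ 6)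
    (wcore wspu : ℝ) (s : Fin n → ℝ)
    (hs : ∀ i, (s i) ^ 2 ≤ 10 * (n : ℝ) / σn2 ^ 2)
    (γ : ℝ) (hγ : 0 < γ) :
    (γ ^ 4 * (1 - c1) / σn2) *
        (((Maj.filter fun i => γ ^ 2 / σn2 < |s i|).card : ℝ) / (nMaj : ℝ)) * (nMaj : ℝ) -
        10 / (σn2 * (n : ℝ) ^ 3) ≤
      wcore ^ 2 + wspu ^ 2 + ∑ k, (∑ i, s i * xnoise i k) ^ 2 :=
  norm_lower_bound_from_memorized_fraction_general N nMaj n Maj xnoise σn2 hσn2 c1 hc1' hnorm hdot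
    wcore wspu s hs γ
end

section
/- (Coefficient bound for the minimum-norm separator.) Suppose the training noise vectors satisfy (1−c₁)·σ_noise² ≤ ‖x_noise^(i)‖₂² ≤ (1+c₁)·σ_noise² for all i and |⟨x_noise^(i), x_noise^(j)⟩| ≤ σ_noise²/n⁶ for all i ≠ j, with c₁ < 1/2000 and n ≥ 2000. Let w = [w_core, w_spu, w_noise] with w_noise = Σ_i s_i·x_noise^(i), and suppose ‖w‖₂² ≤ u² + (s·σ_noise²)²·((1+c₁)·n_min + 1/n⁴)/σ_noise² with u = 1.3125 and s·σ_noise² = 2.61, and σ_noise² ≤ n_maj/360000. Then M² ≤ 10·n, where M = σ_noise² · max_i |s_i|; equivalently, s_i² ≤ 10·n/σ_noise⁴ for all i. -/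
open Finset

set_option maxHeartbeats 2000000 in
/-- **Coefficient bound for the minimum-norm separator.** Suppose the training noise vectors
satisfy `(1−c₁)·σ_noise² ≤ ‖x_noise⁽ⁱ⁾‖₂² ≤ (1+c₁)·σ_noise²` and
`|⟨x_noise⁽ⁱ⁾, x_noise⁽ʲ⁾⟩| ≤ σ_noise²/n⁶` for `i ≠ j`, with `c₁ < 1/2000`, `n ≥ 2000`.
If `w = [w_core, w_spu, Σ_i s_i·x_noise⁽ⁱ⁾]` satisfies
`‖w‖₂² ≤ u² + (2.61)²·((1+c₁)·n_min + 1/n⁴)/σ_noise²` with `u = 1.3125`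
(here `2.61 = s·σ_noise²` for the constant `s` of the construction), and
`σ_noise² ≤ n_maj/360000`, then `s_i² ≤ 10·n/σ_noise⁴` for all `i`. -/
theorem coefficient_bound_min_norm_separator
    (N nMaj nMin : ℕ) (n : ℕ) (hn : n = nMaj + nMin) (hn2000 : 2000 ≤ n)
    (xnoise : Fin n → Fin N → ℝ)
    (σn2 : ℝ) (hσn2 : 0 < σn2) (hσn2' : σn2 ≤ (nMaj : ℝ) / 360000)
    (c1 : ℝ) (hc1 : 0 < c1) (hc1' : c1 < 1/2000)
    (hnorm : ∀ i, (1 - c1) * σn2 ≤ ∑ k, (xnoise i k) ^ 2 ∧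
                  ∑ k, (xnoise i k) ^ 2 ≤ (1 + c1) * σn2)
    (hdot : ∀ i j, i ≠ j → |∑ k, xnoise i k * xnoise j k| ≤ σn2 / (n : ℝ) ^ 6)
    (wcore wspu : ℝ) (s : Fin n → ℝ)
    (hwnorm : wcore ^ 2 + wspu ^ 2 + ∑ k, (∑ i, s i * xnoise i k) ^ 2 ≤
        1.3125 ^ 2 + 2.61 ^ 2 * ((1 + c1) * (nMin : ℝ) + 1 / (n : ℝ) ^ 4) / σn2) :
    ∀ i, (s i) ^ 2 ≤ 10 * (n : ℝ) / σn2 ^ 2 := by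
  intro i0
  have hnR : (2000 : ℝ) ≤ (n : ℝ) := by exact_mod_cast hn2000
  have hnpos : (0 : ℝ) < (n : ℝ) := by linarith
  set g : Fin n → Fin n → ℝ := fun i j => ∑ k, xnoise i k * xnoise j k with hg
  set Q : ℝ := ∑ k, (∑ i, s i * xnoise i k) ^ 2 with hQdef
  set S : ℝ := ∑ i, (s i) ^ 2 with hSdef
  -- expand Q as a double sum
  have hQ : Q = ∑ i, ∑ j, (s i * s j) * g i j := by
    have h1 : ∀ k, (∑ i, s i * xnoise i k) ^ 2
        = ∑ i, ∑ j, s i * s j * (xnoise i k * xnoise j k) := by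
      intro k
      rw [sq, Finset.sum_mul_sum]
      exact Finset.sum_congr rfl fun i _ => Finset.sum_congr rfl fun j _ => by ring
    calc Q = ∑ k, ∑ i, ∑ j, s i * s j * (xnoise i k * xnoise j k) :=
          Finset.sum_congr rfl fun k _ => h1 k
      _ = ∑ i, ∑ k : Fin N, ∑ j, s i * s j * (xnoise i k * xnoise j k) := Finset.sum_comm
      _ = ∑ i, ∑ j, ∑ k : Fin N, s i * s j * (xnoise i k * xnoise j k) :=
          Finset.sum_congr rfl fun i _ => Finset.sum_comm
      _ = ∑ i, ∑ j, (s i * s j) * g i j := by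
          refine Finset.sum_congr rfl fun i _ => Finset.sum_congr rfl fun j _ => ?_
          rw [hg, Finset.mul_sum]
  have hT := sq_sum_le_card_mul_sum_sq (s := (univ : Finset (Fin n))) (f := fun i => |s i|)
  simp only [Finset.card_univ, Fintype.card_fin, sq_abs] at hT
  -- lower bound each row of the double sum
  have hrow : ∀ i : Fin n, (1 - c1) * σn2 * (s i)^2
      - σn2 / (n:ℝ)^6 * (|s i| * ∑ j, |s j|) ≤ ∑ j, (s i * s j) * g i j := by
    intro i
    have hsplit : ∑ j, (s i * s j) * g i j
        = (s i * s i) * g i i + ∑ j ∈ univ.erase i, (s i * s j) * g i j :=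
      (Finset.add_sum_erase _ (fun j => (s i * s j) * g i j) (Finset.mem_univ i)).symm
    rw [hsplit]
    have hd : (1 - c1) * σn2 * (s i)^2 ≤ (s i * s i) * g i i := by
      have := (hnorm i).1
      have hgii : g i i = ∑ k, (xnoise i k)^2 := by
        rw [hg]; exact Finset.sum_congr rfl fun k _ => (sq (xnoise i k)).symm
      rw [hgii] at *
      nlinarith [sq_nonneg (s i), this]
    have hoff : - (σn2 / (n:ℝ)^6 * (|s i| * ∑ j, |s j|)) ≤
        ∑ j ∈ univ.erase i, (s i * s j) * g i j := by
      have h1 : ∀ j ∈ univ.erase i, -(σn2 / (n:ℝ)^6 * (|s i| * |s j|)) ≤ (s i * s j) * g i j := by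
        intro j hj
        have hij : i ≠ j := (Finset.ne_of_mem_erase hj).symm
        have h2 := hdot i j hij
        have h3 : |(s i * s j) * g i j| ≤ |s i| * |s j| * (σn2 / (n:ℝ)^6) := by
          rw [abs_mul, abs_mul]
          refine mul_le_mul_of_nonneg_left h2 (by positivity)
        nlinarith [neg_abs_le ((s i * s j) * g i j)]
      calc - (σn2 / (n:ℝ)^6 * (|s i| * ∑ j, |s j|))
          ≤ - (σn2 / (n:ℝ)^6 * (|s i| * ∑ j ∈ univ.erase i, |s j|)) := by
            have : ∑ j ∈ univ.erase i, |s j| ≤ ∑ j, |s j| :=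
              Finset.sum_le_sum_of_subset_of_nonneg (Finset.subset_univ _)
                (fun j _ _ => abs_nonneg _)
            have hc : 0 ≤ σn2 / (n:ℝ)^6 * |s i| := by positivity
            nlinarith
        _ = ∑ j ∈ univ.erase i, -(σn2 / (n:ℝ)^6 * (|s i| * |s j|)) := by
            rw [Finset.mul_sum, Finset.mul_sum, ← Finset.sum_neg_distrib]
        _ ≤ _ := Finset.sum_le_sum h1
    linarith
  have hQlow : (1 - c1) * σn2 * S - σn2 / (n:ℝ)^6 * ((∑ j, |s j|) * (∑ j, |s j|)) ≤ Q := by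
    rw [hQ]
    have h := Finset.sum_le_sum (fun i (_ : i ∈ univ) => hrow i)
    have e1 : ∑ i, ((1 - c1) * σn2 * (s i)^2 - σn2 / (n:ℝ)^6 * (|s i| * ∑ j, |s j|))
        = (1 - c1) * σn2 * S - σn2 / (n:ℝ)^6 * ((∑ j, |s j|) * (∑ j, |s j|)) := by
      rw [Finset.sum_sub_distrib, ← Finset.mul_sum, ← Finset.mul_sum, ← Finset.sum_mul]
    linarith [h, e1.le, e1.ge]
  -- combine
  have hsq : (s i0)^2 ≤ S :=
    Finset.single_le_sum (f := fun i => (s i)^2) (fun i _ => sq_nonneg _) (Finset.mem_univ i0)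
  have hSnn : 0 ≤ S := Finset.sum_nonneg fun i _ => sq_nonneg _
  rw [← hSdef] at hT
  clear_value g Q S
  have hn5 : (n:ℝ) / (n:ℝ)^6 ≤ 1/2000 := by
    rw [div_le_div_iff₀ (by positivity) (by norm_num)]
    have h5 : (n:ℝ) ≤ (n:ℝ)^5 := le_self_pow₀ (by linarith) (by norm_num)
    nlinarith [h5, hnpos]
  have hkey : σn2 * ((1 - c1) - 1/2000) * (s i0)^2 ≤ Q := by
    have h1 : (∑ j, |s j|) * (∑ j, |s j|) ≤ (n:ℝ) * S := by rw [← sq]; exact hT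
    have h1' : σn2 / (n:ℝ)^6 * ((∑ j, |s j|) * (∑ j, |s j|)) ≤ σn2 / (n:ℝ)^6 * ((n:ℝ) * S) :=
      mul_le_mul_of_nonneg_left h1 (by positivity)
    have e2 : σn2 / (n:ℝ)^6 * ((n:ℝ) * S) = σn2 * ((n:ℝ) / (n:ℝ)^6) * S := by ring
    have h2 : σn2 * ((n:ℝ) / (n:ℝ)^6) * S ≤ σn2 * (1/2000) * S := by
      have := mul_le_mul_of_nonneg_left hn5 (show (0:ℝ) ≤ σn2 * S by positivity)
      linarith [this]
    have hcoef : 0 ≤ σn2 * ((1 - c1) - 1/2000) := by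
      have h : (0:ℝ) ≤ (1 - c1) - 1/2000 := by linarith
      positivity
    linarith [mul_le_mul_of_nonneg_left hsq hcoef, hQlow, h1', h2, e2.le, e2.ge]
  -- final numeric step
  have hQle : Q ≤ 1.3125 ^ 2 + 2.61 ^ 2 * ((1 + c1) * (nMin : ℝ) + 1 / (n : ℝ) ^ 4) / σn2 := by
    linarith [sq_nonneg wcore, sq_nonneg wspu]
  have hnMin : (nMin : ℝ) ≤ (n : ℝ) := by
    have : nMin ≤ n := by omega
    exact_mod_cast this
  have hnMinnn : (0:ℝ) ≤ (nMin : ℝ) := Nat.cast_nonneg _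
  have hn4 : 1 / (n:ℝ)^4 ≤ 1 := by
    rw [div_le_one (by positivity)]
    calc (1:ℝ) = 1^4 := by norm_num
      _ ≤ (n:ℝ)^4 := pow_le_pow_left₀ (by norm_num) (by linarith) 4
  have hσn : σn2 ≤ (n:ℝ)/360000 := by
    refine le_trans hσn2' ?_
    have : (nMaj : ℝ) ≤ (n : ℝ) := by exact_mod_cast (show nMaj ≤ n by omega)
    linarith
  have hkey2 : σn2^2 * ((1 - c1) - 1/2000) * (s i0)^2 ≤ σn2 * Q := by
    linarith [mul_le_mul_of_nonneg_left hkey (le_of_lt hσn2)]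
  have hQσ : σn2 * Q ≤ 1.3125^2 * σn2 + 2.61^2 * ((1 + c1) * (nMin:ℝ) + 1/(n:ℝ)^4) := by
    have h := mul_le_mul_of_nonneg_left hQle (le_of_lt hσn2)
    have e : σn2 * (1.3125 ^ 2 + 2.61 ^ 2 * ((1 + c1) * (nMin : ℝ) + 1 / (n : ℝ) ^ 4) / σn2)
        = 1.3125^2 * σn2 + 2.61^2 * ((1 + c1) * (nMin:ℝ) + 1/(n:ℝ)^4) := by
      field_simp
    rw [e] at h
    exact h
  rw [le_div_iff₀ (by positivity : (0:ℝ) < σn2^2)]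
  have hPnn : (0:ℝ) ≤ (s i0)^2 * σn2^2 := by positivity
  have hcP : c1 * ((s i0)^2 * σn2^2) ≤ (1/2000) * ((s i0)^2 * σn2^2) :=
    mul_le_mul_of_nonneg_right hc1'.le hPnn
  have hcn : c1 * (nMin:ℝ) ≤ (1/2000) * (n:ℝ) := by nlinarith [hnMinnn, hnMin, hc1, hc1']
  nlinarith [hkey2, hQσ, hcP, hcn, hn4, hσn, hnR, hPnn]
end

section
/- (Existence of an all-memorizing separator using neither core nor spurious features.) Suppose n ≥ 2000 and the training noise vectors satisfy (1−c₁)·σ_noise² ≤ ‖x_noise^(i)‖₂² ≤ (1+c₁)·σ_noise² for all i and |⟨x_noise^(i), x_noise^(j)⟩| ≤ σ_noise²/n⁶ for all i ≠ j, with c₁ < 1/2000. Then the vector w with w_core = 0, w_spu = 0, and w_noise = Σ_i y^(i)·(2/σ_noise²)·x_noise^(i) is a separator (y^(i)(w·x^(i)) ≥ 1 for all i), and its norm satisfies ‖w‖₂² ≤ (4/σ_noise²)·((1+c₁)·n + 1/n⁴). -/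
open Finset

/-- **Existence of an all-memorizing separator using neither core nor spurious features.**
If `n ≥ 2000` and the training noise vectors satisfy
`(1−c₁)·σ_noise² ≤ ‖x_noise⁽ⁱ⁾‖₂² ≤ (1+c₁)·σ_noise²` and
`|⟨x_noise⁽ⁱ⁾, x_noise⁽ʲ⁾⟩| ≤ σ_noise²/n⁶` for `i ≠ j`, with `c₁ < 1/2000`, then
`w = [0, 0, Σ_i y⁽ⁱ⁾·(2/σ_noise²)·x_noise⁽ⁱ⁾]` is a separator and
`‖w‖₂² ≤ (4/σ_noise²)·((1+c₁)·n + 1/n⁴)`. -/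
theorem all_memorizing_separator
    (N n : ℕ) (hn2000 : 2000 ≤ n)
    (y : Fin n → ℝ) (hy : ∀ i, y i = 1 ∨ y i = -1)
    (xcore xspu : Fin n → ℝ) (xnoise : Fin n → Fin N → ℝ)
    (σn2 : ℝ) (hσn2 : 0 < σn2)
    (c1 : ℝ) (hc1 : 0 < c1) (hc1' : c1 < 1/2000)
    (hnorm : ∀ i, (1 - c1) * σn2 ≤ ∑ k, (xnoise i k) ^ 2 ∧
                  ∑ k, (xnoise i k) ^ 2 ≤ (1 + c1) * σn2)
    (hdot : ∀ i j, i ≠ j → |∑ k, xnoise i k * xnoise j k| ≤ σn2 / (n : ℝ) ^ 6) :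
    (∀ i, 1 ≤ y i *
        ((0 : ℝ) * xcore i + (0 : ℝ) * xspu i +
          ∑ k, (∑ j, y j * (2 / σn2) * xnoise j k) * xnoise i k)) ∧
      (0 : ℝ) ^ 2 + (0 : ℝ) ^ 2 + ∑ k, (∑ j, y j * (2 / σn2) * xnoise j k) ^ 2 ≤
        (4 / σn2) * ((1 + c1) * (n : ℝ) + 1 / (n : ℝ) ^ 4) := by
  have hnR : (2000 : ℝ) ≤ (n : ℝ) := by exact_mod_cast hn2000
  have hnpos : (0 : ℝ) < (n : ℝ) := by linarith
  have hy1 : ∀ i, |y i| = 1 := by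
    intro i; rcases hy i with h | h <;> simp [h]
  have hy2 : ∀ i, y i * y i = 1 := by
    intro i; rcases hy i with h | h <;> simp [h]
  set S : Fin n → Fin n → ℝ := fun i j => ∑ k, xnoise i k * xnoise j k with hSdef
  have hSii : ∀ i, S i i = ∑ k, (xnoise i k) ^ 2 := by
    intro i; simp [hSdef, sq]
  have hSoff : ∀ i j, i ≠ j → |S i j| ≤ σn2 / (n : ℝ) ^ 6 := hdot
  constructor
  · intro i
    have h1 : (∑ k, (∑ j, y j * (2 / σn2) * xnoise j k) * xnoise i k)
        = ∑ j, y j * (2 / σn2) * S j i := by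
      simp only [Finset.sum_mul]
      rw [Finset.sum_comm]
      refine Finset.sum_congr rfl fun j _ => ?_
      rw [hSdef]
      simp only [Finset.mul_sum]
      exact Finset.sum_congr rfl fun k _ => by ring
    have h2 : y i * (∑ j, y j * (2 / σn2) * S j i)
        = (2 / σn2) * S i i + ∑ j ∈ univ.erase i, y i * y j * (2 / σn2) * S j i := by
      rw [Finset.mul_sum, ← Finset.add_sum_erase _ _ (Finset.mem_univ i)]
      have heq : y i * (y i * (2 / σn2) * S i i) = (y i * y i) * ((2 / σn2) * S i i) := by ring
      rw [heq, hy2 i, one_mul]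
      congr 1
      exact Finset.sum_congr rfl fun j _ => by ring
    have hdiag : 2 * (1 - c1) ≤ (2 / σn2) * S i i := by
      have h := (hnorm i).1
      rw [hSii]
      rw [div_mul_eq_mul_div, le_div_iff₀ hσn2]
      nlinarith
    have htail : |∑ j ∈ univ.erase i, y i * y j * (2 / σn2) * S j i| ≤ 2 / (n : ℝ) ^ 5 := by
      calc |∑ j ∈ univ.erase i, y i * y j * (2 / σn2) * S j i|
          ≤ ∑ j ∈ univ.erase i, |y i * y j * (2 / σn2) * S j i| :=
            Finset.abs_sum_le_sum_abs _ _
        _ ≤ ∑ j ∈ univ.erase i, (2 / σn2) * (σn2 / (n : ℝ) ^ 6) := by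
            refine Finset.sum_le_sum fun j hj => ?_
            have hji : j ≠ i := Finset.ne_of_mem_erase hj
            have h1 : |y i * y j * (2 / σn2) * S j i| = (2 / σn2) * |S j i| := by
              rw [abs_mul, abs_mul, abs_mul, hy1 i, hy1 j, abs_of_nonneg (by positivity : (0:ℝ) ≤ 2 / σn2)]
              ring
            rw [h1]
            exact mul_le_mul_of_nonneg_left (hSoff j i hji) (by positivity)
        _ = ((univ.erase i).card : ℝ) * ((2 / σn2) * (σn2 / (n : ℝ) ^ 6)) := by
            rw [Finset.sum_const, nsmul_eq_mul]
        _ ≤ (n : ℝ) * ((2 / σn2) * (σn2 / (n : ℝ) ^ 6)) := by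
            refine mul_le_mul_of_nonneg_right ?_ (by positivity)
            have : (univ.erase i).card ≤ n := by
              calc (univ.erase i).card ≤ (univ : Finset (Fin n)).card :=
                    Finset.card_le_card (Finset.erase_subset _ _)
                _ = n := by simp
            exact_mod_cast this
        _ = 2 / (n : ℝ) ^ 5 := by field_simp
    simp only [zero_mul, zero_add]
    rw [h1, h2]
    have h5 : (0:ℝ) < (n : ℝ) ^ 5 := by positivity
    have hsmall : 2 / (n : ℝ) ^ 5 ≤ 2 / (2000 : ℝ) ^ 5 := by
      apply div_le_div_of_nonneg_left (by norm_num) (by norm_num)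
      exact pow_le_pow_left₀ (by norm_num) hnR 5
    have := abs_le.mp htail
    nlinarith [this.1]
  · simp only [zero_pow, ne_eq, OfNat.ofNat_ne_zero, not_false_eq_true, zero_add]
    have h1 : ∑ k, (∑ j, y j * (2 / σn2) * xnoise j k) ^ 2
        = ∑ j, ∑ l, y j * y l * (4 / σn2 ^ 2) * S j l := by
      have : ∀ k : Fin N, (∑ j, y j * (2 / σn2) * xnoise j k) ^ 2
          = ∑ j, ∑ l, (y j * (2 / σn2) * xnoise j k) * (y l * (2 / σn2) * xnoise l k) := by
        intro k
        rw [sq, Finset.sum_mul_sum]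
      rw [Finset.sum_congr rfl fun k _ => this k, Finset.sum_comm]
      refine Finset.sum_congr rfl fun j _ => ?_
      rw [Finset.sum_comm]
      refine Finset.sum_congr rfl fun l _ => ?_
      rw [hSdef]
      simp only [Finset.mul_sum]
      refine Finset.sum_congr rfl fun k _ => ?_
      field_simp
      ring
    rw [h1]
    have hper : ∀ j, ∑ l, y j * y l * (4 / σn2 ^ 2) * S j l
        ≤ (4 / σn2) * (1 + c1) + (4 / σn2) * (1 / (n : ℝ) ^ 5) := by
      intro j
      rw [← Finset.add_sum_erase _ _ (Finset.mem_univ j)]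
      have hd : y j * y j * (4 / σn2 ^ 2) * S j j ≤ (4 / σn2) * (1 + c1) := by
        rw [hy2 j, one_mul, hSii]
        have h := (hnorm j).2
        rw [div_mul_eq_mul_div, div_mul_eq_mul_div, div_le_div_iff₀ (by positivity) hσn2]
        nlinarith [(hnorm j).2]
      have ht : ∑ l ∈ univ.erase j, y j * y l * (4 / σn2 ^ 2) * S j l
          ≤ (4 / σn2) * (1 / (n : ℝ) ^ 5) := by
        calc ∑ l ∈ univ.erase j, y j * y l * (4 / σn2 ^ 2) * S j l
            ≤ ∑ l ∈ univ.erase j, (4 / σn2 ^ 2) * (σn2 / (n : ℝ) ^ 6) := by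
              refine Finset.sum_le_sum fun l hl => ?_
              have hlj : j ≠ l := (Finset.ne_of_mem_erase hl).symm
              calc y j * y l * (4 / σn2 ^ 2) * S j l
                  ≤ |y j * y l * (4 / σn2 ^ 2) * S j l| := le_abs_self _
                _ = (4 / σn2 ^ 2) * |S j l| := by
                    rw [abs_mul, abs_mul, abs_mul, hy1 j, hy1 l,
                      abs_of_nonneg (by positivity : (0:ℝ) ≤ 4 / σn2 ^ 2)]
                    ring
                _ ≤ (4 / σn2 ^ 2) * (σn2 / (n : ℝ) ^ 6) :=
                    mul_le_mul_of_nonneg_left (hSoff j l hlj) (by positivity)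
          _ = ((univ.erase j).card : ℝ) * ((4 / σn2 ^ 2) * (σn2 / (n : ℝ) ^ 6)) := by
              rw [Finset.sum_const, nsmul_eq_mul]
          _ ≤ (n : ℝ) * ((4 / σn2 ^ 2) * (σn2 / (n : ℝ) ^ 6)) := by
              refine mul_le_mul_of_nonneg_right ?_ (by positivity)
              have : (univ.erase j).card ≤ n := by
                calc (univ.erase j).card ≤ (univ : Finset (Fin n)).card :=
                      Finset.card_le_card (Finset.erase_subset _ _)
                  _ = n := by simp
              exact_mod_cast this
          _ = (4 / σn2) * (1 / (n : ℝ) ^ 5) := by field_simp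
      linarith
    calc ∑ j, ∑ l, y j * y l * (4 / σn2 ^ 2) * S j l
        ≤ ∑ j : Fin n, ((4 / σn2) * (1 + c1) + (4 / σn2) * (1 / (n : ℝ) ^ 5)) :=
          Finset.sum_le_sum fun j _ => hper j
      _ = (n : ℝ) * ((4 / σn2) * (1 + c1) + (4 / σn2) * (1 / (n : ℝ) ^ 5)) := by
          rw [Finset.sum_const, nsmul_eq_mul]; simp
      _ = (4 / σn2) * ((1 + c1) * (n : ℝ) + 1 / (n : ℝ) ^ 4) := by
          field_simp
end

section
/- (Population minimizer of the reweighted logistic loss uses only the core feature.) In the underparameterized setting (N = 0), for any p_maj ∈ (0,1), σ_core > 0, σ_spu ≥ 0, the population reweighted logistic loss L_rw(w) = E[ℓ_rw(x, y, w)] has vanishing gradient at w* = (2/σ_core², 0): both partial derivatives ∂L_rw/∂w_core and ∂L_rw/∂w_spu are zero at w*. -/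
/-!
Reweighting by `1 / p_maj` and `1 / (1 - p_maj)` cancels the group frequencies, so the population
loss is the plain average of the four group losses `groupLoss w y a`. Flipping the sign of `x_spu`
exchanges the groups `(y, a)` and `(y, -a)`, hence the loss is even in `w_spu` and its
`w_spu`-derivative vanishes at `0`. For `w_spu = 0` a group loss depends only on
`x_core ∼ N(y, σ²)`, and its `w_core`-derivative at `2 / σ²` is `-y · E[x · sigmoid (-2 y x / σ²)]`,
which vanishes because the Gaussian density satisfies `φ(-x) = φ(x) · exp (-2 y x / σ²)`.
-/

open MeasureTheory ProbabilityTheory Real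
open scoped ENNReal NNReal Classical

noncomputable section

/-- A sample in the underparameterized (N = 0) setting: `((x_core, x_spu), y, a)`. -/
abbrev Samp : Type := (ℝ × ℝ) × ℝ × ℝ

/-- Distribution of a sample from the group with label `y` and spurious attribute `a`:
`x_core ∼ N(y, σ_core²)`, `x_spu ∼ N(a, σ_spu²)`, independent. -/
def grpMeasure (vCore vSpu : ℝ≥0) (y a : ℝ) : Measure Samp :=
  ((gaussianReal y vCore).prod (gaussianReal a vSpu)).prod
    ((Measure.dirac y).prod (Measure.dirac a))

/-- Joint distribution of `((x_core, x_spu), y, a)`: `y` is uniform on `{−1,1}`, `a = y`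
with probability `p_maj` and `a = −y` otherwise, and `x | (y,a)` is group-Gaussian. -/
def jointMeasure (pmaj : ℝ) (vCore vSpu : ℝ≥0) : Measure Samp :=
  ENNReal.ofReal (pmaj / 2) • grpMeasure vCore vSpu 1 1 +
  ENNReal.ofReal (pmaj / 2) • grpMeasure vCore vSpu (-1) (-1) +
  ENNReal.ofReal ((1 - pmaj) / 2) • grpMeasure vCore vSpu 1 (-1) +
  ENNReal.ofReal ((1 - pmaj) / 2) • grpMeasure vCore vSpu (-1) 1

/-- The reweighted logistic loss: `1/p_maj · log(1+exp(−y w·x))` on majority samples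
(`a = y`) and `1/(1−p_maj) · log(1+exp(−y w·x))` on minority samples (`a = −y`). -/
def lossRW (pmaj : ℝ) (w : ℝ × ℝ) (ω : Samp) : ℝ :=
  (if ω.2.2 = ω.2.1 then 1 / pmaj else 1 / (1 - pmaj)) *
    Real.log (1 + Real.exp (- ω.2.1 * (w.1 * ω.1.1 + w.2 * ω.1.2)))

/-- Test error of `w ∈ ℝ²` on the group `(y, a)`: probability that `y(w·x) ≤ 0` for a
fresh `x` from that group. -/
def errGroup2 (vCore vSpu : ℝ≥0) (w : ℝ × ℝ) (y a : ℝ) : ℝ :=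
  (((gaussianReal y vCore).prod (gaussianReal a vSpu))
    {x : ℝ × ℝ | y * (w.1 * x.1 + w.2 * x.2) ≤ 0}).toReal

/-- Worst-group test error of `w ∈ ℝ²`: maximum of the group errors over
`(y, a) ∈ {−1,1}²`. -/
def robErr2 (vCore vSpu : ℝ≥0) (w : ℝ × ℝ) : ℝ :=
  max (max (errGroup2 vCore vSpu w 1 1) (errGroup2 vCore vSpu w 1 (-1)))
      (max (errGroup2 vCore vSpu w (-1) 1) (errGroup2 vCore vSpu w (-1) (-1)))

end

/-- The population reweighted logistic loss `L_rw(w) = E[ℓ_rw(x, y, w)]`. -/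
noncomputable def popLoss (pmaj : ℝ) (vCore vSpu : ℝ≥0) (w : ℝ × ℝ) : ℝ :=
  ∫ ω, lossRW pmaj w ω ∂(jointMeasure pmaj vCore vSpu)


open Filter

namespace Real

noncomputable def softplus (u : ℝ) : ℝ := log (1 + exp u)

theorem softplus_nonneg (u : ℝ) : 0 ≤ softplus u :=
  log_nonneg (by linarith [exp_pos u])

theorem softplus_le_log_two_add_abs (u : ℝ) : softplus u ≤ log 2 + |u| := by
  have h : 1 + exp u ≤ 2 * exp |u| := by
    linarith [exp_le_exp.2 (le_abs_self u), one_le_exp (abs_nonneg u)]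
  calc softplus u ≤ log (2 * exp |u|) := log_le_log (by positivity) h
    _ = log 2 + |u| := by rw [log_mul two_ne_zero (exp_pos _).ne', log_exp]

theorem continuous_softplus : Continuous softplus :=
  (continuous_const.add continuous_exp).log fun u => (add_pos one_pos (exp_pos u)).ne'

theorem hasDerivAt_softplus (u : ℝ) : HasDerivAt softplus (sigmoid u) u := by
  refine (((hasDerivAt_exp u).const_add 1).log (add_pos one_pos (exp_pos u)).ne').congr_deriv ?_
  rw [sigmoid_def, exp_neg]
  field_simp
  ring

end Real

theorem MeasureTheory.Integrable.softplus {α : Type*} [MeasurableSpace α] {μ : Measure α}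
    [IsFiniteMeasure μ] {f : α → ℝ} (hf : Integrable f μ) :
    Integrable (fun ω => softplus (f ω)) μ :=
  ((integrable_const (log 2)).add hf.abs).mono'
    (continuous_softplus.comp_aestronglyMeasurable hf.1) <| .of_forall fun ω => by
      rw [norm_of_nonneg (softplus_nonneg _)]
      exact softplus_le_log_two_add_abs _

/-- `|A|` dominates the `t`-derivative of the integrand, since `0 ≤ sigmoid ≤ 1`. -/
theorem hasDerivAt_integral_softplus {α : Type*} [MeasurableSpace α] {μ : Measure α}
    [IsFiniteMeasure μ] {A B : α → ℝ} (hA : Integrable A μ) (hB : Integrable B μ) (t₀ : ℝ) :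
    HasDerivAt (fun t => ∫ ω, softplus (A ω * t + B ω) ∂μ)
      (∫ ω, A ω * sigmoid (A ω * t₀ + B ω) ∂μ) t₀ := by
  have hAB (t : ℝ) : Integrable (fun ω => A ω * t + B ω) μ := (hA.mul_const t).add hB
  refine (hasDerivAt_integral_of_dominated_loc_of_deriv_le (bound := fun ω => |A ω|)
    (F' := fun t ω => A ω * sigmoid (A ω * t + B ω)) univ_mem
    (.of_forall fun t => (hAB t).softplus.aestronglyMeasurable) (hAB t₀).softplus
    (hA.1.mul (continuous_sigmoid.comp_aestronglyMeasurable (hAB t₀).1)) ?_ hA.abs ?_).2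
  · refine .of_forall fun ω t _ => ?_
    rw [norm_mul, norm_eq_abs, norm_of_nonneg (sigmoid_nonneg _)]
    exact mul_le_of_le_one_right (abs_nonneg _) (sigmoid_le_one _)
  · refine .of_forall fun ω t _ => ?_
    exact ((hasDerivAt_softplus (A ω * t + B ω)).comp t
      (((hasDerivAt_id' t).const_mul (A ω)).add_const (B ω))).congr_deriv
      (by rw [mul_one, mul_comm])

theorem Function.Even.hasDerivAt_zero {F : Type*} [NormedAddCommGroup F] [NormedSpace ℝ F]
    {f : ℝ → F} (hf : f.Even) (h : DifferentiableAt ℝ f 0) : HasDerivAt f 0 0 := by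
  have hd := h.hasDerivAt
  have hneg : HasDerivAt f ((-1 : ℝ) • deriv f 0) 0 := by
    have hd' : HasDerivAt f (deriv f 0) (-0) := by rwa [neg_zero]
    have := hd'.scomp (0 : ℝ) (hasDerivAt_neg 0)
    rwa [show f ∘ (fun x => -x) = f from funext hf] at this
  have h2 : (2 : ℝ) • deriv f 0 = 0 := by
    rw [two_smul]
    nth_rewrite 2 [hd.unique hneg]
    simp
  rwa [(smul_eq_zero.mp h2).resolve_left two_ne_zero] at hd

namespace ProbabilityTheory

theorem integrable_id_gaussianReal (m : ℝ) (v : ℝ≥0) :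
    Integrable (fun x => x) (gaussianReal m v) :=
  (memLp_id_gaussianReal 1).integrable le_rfl

theorem gaussianPDFReal_neg (m : ℝ) (v : ℝ≥0) (x : ℝ) :
    gaussianPDFReal m v (-x) = gaussianPDFReal m v x * exp (-(2 * m / v) * x) := by
  simp only [gaussianPDFReal_def]
  rw [mul_assoc (_⁻¹), ← exp_add]
  ring_nf

/-- `gaussianPDFReal_neg` and `sigmoid z * exp (-z) = sigmoid (-z)` make the integrand odd. -/
theorem integral_mul_sigmoid_gaussianReal (m : ℝ) {v : ℝ≥0} (hv : v ≠ 0) :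
    ∫ x, x * sigmoid (-(2 * m / v) * x) ∂gaussianReal m v = 0 := by
  set g : ℝ → ℝ := fun x => gaussianPDFReal m v x • (x * sigmoid (-(2 * m / v) * x))
  have hodd (x : ℝ) : g (-x) = -g x := by
    have h := sigmoid_mul_rexp_neg (2 * m / v * x)
    simp only [g, smul_eq_mul, gaussianPDFReal_neg, neg_mul, mul_neg, neg_neg] at h ⊢
    rw [← h]
    ring
  have hg : ∫ x, g x = -∫ x, g x :=
    calc ∫ x, g x = ∫ x, g (-x) := (integral_neg_eq_self g volume).symm
      _ = -∫ x, g x := by simp_rw [hodd]; exact integral_neg g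
  rw [integral_gaussianReal_eq_integral_smul hv]
  linarith

end ProbabilityTheory

noncomputable def groupLoss (vCore vSpu : ℝ≥0) (w : ℝ × ℝ) (y a : ℝ) : ℝ :=
  ∫ x : ℝ × ℝ, softplus (-y * (w.1 * x.1 + w.2 * x.2))
    ∂(gaussianReal y vCore).prod (gaussianReal a vSpu)

section GroupLoss

variable (vCore vSpu : ℝ≥0)

theorem integrable_softplus_margin (w : ℝ × ℝ) (y a : ℝ) :
    Integrable (fun x : ℝ × ℝ => softplus (-y * (w.1 * x.1 + w.2 * x.2)))
      ((gaussianReal y vCore).prod (gaussianReal a vSpu)) :=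
  ((((integrable_id_gaussianReal y vCore).comp_fst _).const_mul w.1).add
    (((integrable_id_gaussianReal a vSpu).comp_snd _).const_mul w.2)).const_mul (-y) |>.softplus

theorem integrable_lossRW_grpMeasure (pmaj : ℝ) (w : ℝ × ℝ) (y a : ℝ) :
    Integrable (lossRW pmaj w) (grpMeasure vCore vSpu y a) := by
  rw [grpMeasure, Measure.dirac_prod_dirac, Measure.prod_dirac,
    (measurableEmbedding_prod_mk_right _).integrable_map_iff]
  exact (integrable_softplus_margin vCore vSpu w y a).const_mul
    (if a = y then 1 / pmaj else 1 / (1 - pmaj))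

theorem integral_lossRW_grpMeasure (pmaj : ℝ) (w : ℝ × ℝ) (y a : ℝ) :
    ∫ ω, lossRW pmaj w ω ∂grpMeasure vCore vSpu y a =
      (if a = y then 1 / pmaj else 1 / (1 - pmaj)) * groupLoss vCore vSpu w y a := by
  rw [grpMeasure, Measure.dirac_prod_dirac, Measure.prod_dirac,
    (measurableEmbedding_prod_mk_right _).integral_map, groupLoss, ← integral_const_mul]
  rfl

theorem popLoss_eq_average_groupLoss {pmaj : ℝ} (hp0 : 0 < pmaj) (hp1 : pmaj < 1) (w : ℝ × ℝ) :
    popLoss pmaj vCore vSpu w = (1 / 2) * (groupLoss vCore vSpu w 1 1 +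
      groupLoss vCore vSpu w (-1) (-1) + groupLoss vCore vSpu w 1 (-1) +
      groupLoss vCore vSpu w (-1) 1) := by
  have hint (q y a : ℝ) :
      Integrable (lossRW pmaj w) (ENNReal.ofReal q • grpMeasure vCore vSpu y a) :=
    (integrable_lossRW_grpMeasure vCore vSpu pmaj w y a).smul_measure ENNReal.ofReal_ne_top
  have hpart {q : ℝ} (hq : 0 ≤ q) (y a : ℝ) :
      ∫ ω, lossRW pmaj w ω ∂(ENNReal.ofReal q • grpMeasure vCore vSpu y a) =
        q * ((if a = y then 1 / pmaj else 1 / (1 - pmaj)) * groupLoss vCore vSpu w y a) := by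
    rw [integral_smul_measure, ENNReal.toReal_ofReal hq, smul_eq_mul,
      integral_lossRW_grpMeasure]
  have hp1' : 0 < 1 - pmaj := sub_pos.2 hp1
  have hmaj : 0 ≤ pmaj / 2 := by positivity
  have hmin : 0 ≤ (1 - pmaj) / 2 := by positivity
  rw [popLoss, jointMeasure,
    integral_add_measure (((hint _ _ _).add_measure (hint _ _ _)).add_measure (hint _ _ _))
      (hint _ _ _),
    integral_add_measure ((hint _ _ _).add_measure (hint _ _ _)) (hint _ _ _),
    integral_add_measure (hint _ _ _) (hint _ _ _),
    hpart hmaj, hpart hmaj, hpart hmin, hpart hmin]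
  norm_num
  field_simp

theorem groupLoss_neg_snd (w : ℝ × ℝ) (y a : ℝ) :
    groupLoss vCore vSpu (w.1, -w.2) y a = groupLoss vCore vSpu w y (-a) := by
  have hneg : MeasurePreserving (Prod.map id Neg.neg)
      ((gaussianReal y vCore).prod (gaussianReal a vSpu))
      ((gaussianReal y vCore).prod (gaussianReal (-a) vSpu)) :=
    (MeasurePreserving.id _).prod ⟨measurable_neg, gaussianReal_map_neg⟩
  rw [groupLoss, groupLoss, ← hneg.integral_comp (MeasurableEquiv.prodCongr
    (.refl ℝ) (.neg ℝ)).measurableEmbedding]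
  simp only [Prod.map_fst, Prod.map_snd, id, mul_neg, neg_mul]

theorem popLoss_even_snd {pmaj : ℝ} (hp0 : 0 < pmaj) (hp1 : pmaj < 1) (c : ℝ) :
    (fun t => popLoss pmaj vCore vSpu (c, t)).Even := fun t => by
  simp only [popLoss_eq_average_groupLoss vCore vSpu hp0 hp1]
  rw [← groupLoss_neg_snd, ← groupLoss_neg_snd, ← groupLoss_neg_snd, ← groupLoss_neg_snd]
  simp only [neg_neg]
  ring

end GroupLoss

section GroupLossDeriv

variable {vCore : ℝ≥0} (vSpu : ℝ≥0)

theorem hasDerivAt_groupLoss_fst (hv : vCore ≠ 0) (y a : ℝ) :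
    HasDerivAt (fun t => groupLoss vCore vSpu (t, 0) y a) 0 (2 / vCore) := by
  have hA : Integrable (fun x : ℝ × ℝ => -y * x.1)
      ((gaussianReal y vCore).prod (gaussianReal a vSpu)) :=
    ((integrable_id_gaussianReal y vCore).comp_fst _).const_mul (-y)
  have hzero : ∫ x : ℝ × ℝ, -y * x.1 * sigmoid (-y * x.1 * (2 / vCore) + 0)
      ∂(gaussianReal y vCore).prod (gaussianReal a vSpu) = 0 := by
    have hpt (u : ℝ) : -y * u * sigmoid (-y * u * (2 / vCore) + 0) =
        -y * (u * sigmoid (-(2 * y / vCore) * u)) := by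
      rw [show -y * u * (2 / vCore) + 0 = -(2 * y / vCore) * u by ring]
      ring
    rw [integral_fun_fst (fun u => -y * u * sigmoid (-y * u * (2 / vCore) + 0))]
    simp only [hpt, integral_const_mul, integral_mul_sigmoid_gaussianReal y hv, mul_zero,
      smul_zero]
  have hfun : (fun t => groupLoss vCore vSpu (t, 0) y a) = fun t => ∫ x, softplus
      (-y * x.1 * t + 0) ∂(gaussianReal y vCore).prod (gaussianReal a vSpu) := by
    funext t
    simp only [groupLoss]
    congr 1 with x
    congr 1
    ring
  rw [hfun]
  exact (hasDerivAt_integral_softplus (B := fun _ => 0) hA (integrable_const 0) _).congr_deriv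
    hzero

theorem differentiableAt_groupLoss_snd (c y a t₀ : ℝ) :
    DifferentiableAt ℝ (fun t => groupLoss vCore vSpu (c, t) y a) t₀ := by
  have hA : Integrable (fun x : ℝ × ℝ => -y * x.2)
      ((gaussianReal y vCore).prod (gaussianReal a vSpu)) :=
    ((integrable_id_gaussianReal a vSpu).comp_snd _).const_mul (-y)
  have hB : Integrable (fun x : ℝ × ℝ => -y * c * x.1)
      ((gaussianReal y vCore).prod (gaussianReal a vSpu)) :=
    ((integrable_id_gaussianReal y vCore).comp_fst _).const_mul (-y * c)
  have hfun : (fun t => groupLoss vCore vSpu (c, t) y a) = fun t => ∫ x, softplus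
      (-y * x.2 * t + -y * c * x.1) ∂(gaussianReal y vCore).prod (gaussianReal a vSpu) := by
    funext t
    simp only [groupLoss]
    congr 1 with x
    congr 1
    ring
  rw [hfun]
  exact (hasDerivAt_integral_softplus hA hB t₀).differentiableAt

end GroupLossDeriv

/-- **The population minimizer of the reweighted logistic loss uses only the core feature
(Proposition 3).** For any `p_maj ∈ (0,1)`, `σ_core² > 0` and `σ_spu² ≥ 0`, the population
reweighted logistic loss has vanishing gradient at `w* = (2/σ_core², 0)`: both partial
derivatives are zero there. -/
theorem population_minimizer_uses_core_feature
    (pmaj : ℝ) (hp0 : 0 < pmaj) (hp1 : pmaj < 1)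
    (vCore vSpu : ℝ≥0) (hvCore : 0 < (vCore : ℝ)) :
    HasDerivAt (fun t : ℝ => popLoss pmaj vCore vSpu (t, 0)) 0 (2 / (vCore : ℝ)) ∧
    HasDerivAt (fun t : ℝ => popLoss pmaj vCore vSpu (2 / (vCore : ℝ), t)) 0 0 := by
  have hv : vCore ≠ 0 := by exact_mod_cast hvCore.ne'
  have hfst := hasDerivAt_groupLoss_fst vSpu hv
  have hsnd := differentiableAt_groupLoss_snd (vCore := vCore) vSpu (2 / vCore)
  refine ⟨?_, (popLoss_even_snd vCore vSpu hp0 hp1 _).hasDerivAt_zero ?_⟩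
  · simp only [popLoss_eq_average_groupLoss vCore vSpu hp0 hp1]
    simpa using ((((hfst 1 1).add (hfst (-1) (-1))).add (hfst 1 (-1))).add
      (hfst (-1) 1)).const_mul (1 / 2 : ℝ)
  · simp only [popLoss_eq_average_groupLoss vCore vSpu hp0 hp1]
    exact ((((hsnd 1 1 0).add (hsnd (-1) (-1) 0)).add (hsnd 1 (-1) 0)).add
      (hsnd (-1) 1 0)).const_mul (1 / 2 : ℝ)
end
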